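/- (Projection lower bound (eb.3)) Let H be a complex Hilbert space and let P : H → H be a continuous linear map with P ∘ P = P. Then for every ψ ∈ H: ( 1 − ‖ P* ∘ (1 − P) ‖² ) · ‖Pψ‖² ≤ ‖ψ‖², where P* is the Hilbert-space adjoint of P, 1 is the identity of H, and ‖·‖ denotes the Hilbert norm (operator norm for maps). -/

import Mathlib

/-!
Write `ψ = P ψ + (1 - P) ψ`. Since `P` fixes `P ψ` and `1 - P` fixes `(1 - P) ψ`, the cross term
`⟪P ψ, (1 - P) ψ⟫` equals `⟪P ψ, P* (1 - P) (1 - P) ψ⟫`, so it is at most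
`c ‖P ψ‖ ‖(1 - P) ψ‖` with `c = ‖P* (1 - P)‖`. Expanding `‖ψ‖²` and using
`(‖(1 - P) ψ‖ - c ‖P ψ‖)² ≥ 0` gives `‖ψ‖² ≥ (1 - c²) ‖P ψ‖²`.
-/

open ContinuousLinearMap

section

variable {𝕜 E : Type*} [RCLike 𝕜] [NormedAddCommGroup E] [InnerProductSpace 𝕜 E]

theorem one_sub_sq_mul_norm_sq_le_norm_add_sq {x y : E} {c : ℝ}
    (h : ‖(inner 𝕜 x y : 𝕜)‖ ≤ c * ‖x‖ * ‖y‖) :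
    (1 - c ^ 2) * ‖x‖ ^ 2 ≤ ‖x + y‖ ^ 2 := by
  have hre : -(c * ‖x‖ * ‖y‖) ≤ RCLike.re (inner 𝕜 x y : 𝕜) :=
    neg_le_of_abs_le ((RCLike.abs_re_le_norm _).trans h)
  rw [norm_add_sq (𝕜 := 𝕜)]
  nlinarith [sq_nonneg (c * ‖x‖ - ‖y‖)]

namespace IsIdempotentElem

variable [CompleteSpace E] {P : E →L[𝕜] E}

theorem inner_apply_sub_apply (hP : IsIdempotentElem P) (ψ : E) :
    (inner 𝕜 (P ψ) (ψ - P ψ) : 𝕜) =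
      inner 𝕜 (P ψ) ((adjoint P ∘L (ContinuousLinearMap.id 𝕜 E - P)) (ψ - P ψ)) := by
  have hPP : P (P ψ) = P ψ := congr($hP ψ)
  rw [comp_apply, adjoint_inner_right, hPP]
  simp [hPP]

theorem norm_inner_apply_sub_apply_le (hP : IsIdempotentElem P) (ψ : E) :
    ‖(inner 𝕜 (P ψ) (ψ - P ψ) : 𝕜)‖ ≤
      ‖adjoint P ∘L (ContinuousLinearMap.id 𝕜 E - P)‖ * ‖P ψ‖ * ‖ψ - P ψ‖ := by
  set T := adjoint P ∘L (ContinuousLinearMap.id 𝕜 E - P)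
  rw [hP.inner_apply_sub_apply]
  calc _ ≤ ‖P ψ‖ * ‖T (ψ - P ψ)‖ := norm_inner_le_norm _ _
    _ ≤ ‖P ψ‖ * (‖T‖ * ‖ψ - P ψ‖) := by gcongr; exact T.le_opNorm _
    _ = ‖T‖ * ‖P ψ‖ * ‖ψ - P ψ‖ := by ring

end IsIdempotentElem

end

/-- Projection lower bound (eb.3). -/
theorem projection_lower_bound
    {H : Type*} [NormedAddCommGroup H] [InnerProductSpace ℂ H] [CompleteSpace H]
    (P : H →L[ℂ] H) (hP : P.comp P = P) (ψ : H) :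
    (1 - ‖(ContinuousLinearMap.adjoint P).comp
        (ContinuousLinearMap.id ℂ H - P)‖ ^ 2) * ‖P ψ‖ ^ 2
      ≤ ‖ψ‖ ^ 2 := by
  have hP : IsIdempotentElem P := hP
  simpa using one_sub_sq_mul_norm_sq_le_norm_add_sq (hP.norm_inner_apply_sub_apply_le ψ)
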